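/- arXiv:2004.12514 — 2 statements merged into one kernel-verified Lean document; each statement's English description precedes it below -/
import Mathlib

section
/- For the transformed environment ŵ^L defined by ŵ^L_i = ω_i · S(L+1, θ^{i-L}ω) / S(L, θ^{i-L}ω), the sequence L ↦ ŵ^L_i is strictly decreasing in L for each fixed i: ŵ^{L+1}_i < ŵ^L_i for all positive integers L. -/
/-- Potential of an environment `η : ℤ → ℝ`: `V η n = ∑_{i=1}^n log ((1-η i)/η i)`. -/
noncomputable def V (η : ℤ → ℝ) (n : ℕ) : ℝ :=
  ∑ i ∈ Finset.Icc 1 n, Real.log ((1 - η i) / η i)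

/-- Lyapunov functional `S η n = ∑_{j=0}^{n-1} exp (V η j)`. -/
noncomputable def S (η : ℤ → ℝ) (n : ℕ) : ℝ :=
  ∑ j ∈ Finset.range n, Real.exp (V η j)

/-- Shift of the environment: `(θ^m ω)_j = ω_{m+j}`. -/
def shift (m : ℤ) (ω : ℤ → ℝ) : ℤ → ℝ := fun j => ω (m + j)

/-- Transformed environment `ŵ^L_i = ω_i S(L+1, θ^{i-L} ω) / S(L, θ^{i-L} ω)`. -/
noncomputable def hatL (ω : ℤ → ℝ) (L : ℕ) (i : ℤ) : ℝ :=
  ω i * S (shift (i - (L : ℤ)) ω) (L + 1) / S (shift (i - (L : ℤ)) ω) L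

lemma V_shift (η : ℤ → ℝ) (j : ℕ) :
    V (shift 1 η) j = V η (j + 1) - V η 1 := by
  induction j with
  | zero => simp [V]
  | succ n ih =>
    have h1 : V (shift 1 η) (n + 1)
        = V (shift 1 η) n + Real.log ((1 - shift 1 η (↑(n + 1))) / shift 1 η (↑(n + 1))) := by
      rw [V, Finset.sum_Icc_succ_top (by omega)]; rfl
    have h2 : V η (n + 2)
        = V η (n + 1) + Real.log ((1 - η (↑(n + 2))) / η (↑(n + 2))) := by
      rw [V, Finset.sum_Icc_succ_top (by omega)]; rfl
    have h3 : shift 1 η (↑(n + 1)) = η (↑(n + 2)) := by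
      simp [shift]; ring_nf
    rw [h1, ih, h3, h2]; ring

lemma S_shift (η : ℤ → ℝ) (n : ℕ) :
    S (shift 1 η) n * Real.exp (V η 1) = S η (n + 1) - 1 := by
  rw [S, Finset.sum_mul, S, Finset.sum_range_succ']
  have : ∀ j : ℕ, Real.exp (V (shift 1 η) j) * Real.exp (V η 1)
      = Real.exp (V η (j + 1)) := by
    intro j
    rw [V_shift, ← Real.exp_add]; ring_nf
  simp only [this]
  simp [V]

lemma S_lt (η : ℤ → ℝ) {m n : ℕ} (h : m < n) : S η m < S η n := by
  apply Finset.sum_lt_sum_of_subset (Finset.range_subset_range.2 h.le) (Finset.mem_range.2 h)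
    (by simp) (Real.exp_pos _) (fun j _ _ => (Real.exp_pos _).le)

lemma S_one (η : ℤ → ℝ) : S η 1 = 1 := by simp [S, V]

theorem stmt4 (ω : ℤ → ℝ) (hω : ∀ i : ℤ, 0 < ω i ∧ ω i < 1) (i : ℤ) (L : ℕ) (hL : 1 ≤ L) :
    hatL ω (L + 1) i < hatL ω L i := by
  set η : ℤ → ℝ := shift (i - (L : ℤ) - 1) ω with hη
  have hshift : shift (i - (L : ℤ)) ω = shift 1 η := by
    funext j
    simp only [hη, shift]
    ring_nf
  have hcast : (i - ((L + 1 : ℕ) : ℤ)) = i - (L : ℤ) - 1 := by push_cast; ring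
  set B := S η (L + 1) with hB
  set C := S η (L + 2) with hC
  have hB1 : 1 < B := by
    have := S_lt η (show 1 < L + 1 by omega)
    rwa [S_one] at this
  have hBC : B < C := S_lt η (by omega)
  have hB0 : (0 : ℝ) < B := by linarith
  have hωi := (hω i).1
  have he : (0 : ℝ) < Real.exp (V η 1) := Real.exp_pos _
  have hS1 : S (shift 1 η) (L + 1) = (C - 1) / Real.exp (V η 1) := by
    rw [eq_div_iff he.ne', S_shift]
  have hS0 : S (shift 1 η) L = (B - 1) / Real.exp (V η 1) := by
    rw [eq_div_iff he.ne', S_shift]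
  have hL1 : hatL ω (L + 1) i = ω i * C / B := by
    rw [hatL, hcast, ← hη]
  have hL0 : hatL ω L i = ω i * (C - 1) / (B - 1) := by
    rw [hatL, hshift, hS1, hS0]
    field_simp
  rw [hL1, hL0, div_lt_div_iff₀ hB0 (by linarith)]
  nlinarith [mul_pos hωi (sub_pos.2 hBC)]
end

section
/- Let ŵ_i = ω_i · S(i+1,ω)/S(i,ω) be the Doob-transformed environment. Then for any positive integers a, b: S(a, θ^b ŵ) = (S(b+1,ω) · S(b,ω) / e^{V_ω(b)}) · (1/S(b,ω) − 1/S(a+b,ω)). -/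
/-- Doob-transformed environment `ŵ_i = ω_i S(i+1, ω)/S(i, ω)`, meaningful for `i ≥ 1`. -/
noncomputable def hatω (ω : ℤ → ℝ) : ℤ → ℝ := fun i =>
  ω i * S ω (i.toNat + 1) / S ω i.toNat

lemma V_zero (η : ℤ → ℝ) : V η 0 = 0 := by simp [V]

lemma V_succ (η : ℤ → ℝ) (n : ℕ) :
    V η (n + 1) = V η n + Real.log ((1 - η (n + 1 : ℕ)) / η (n + 1 : ℕ)) := by
  rw [V, V, Finset.sum_Icc_succ_top (by omega)]

lemma S_succ (η : ℤ → ℝ) (n : ℕ) : S η (n + 1) = S η n + Real.exp (V η n) := by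
  simp [S, Finset.sum_range_succ]

lemma S_pos (η : ℤ → ℝ) {n : ℕ} (hn : 1 ≤ n) : 0 < S η n := by
  apply Finset.sum_pos (fun i _ => Real.exp_pos _)
  exact Finset.nonempty_range_iff.mpr (by omega)

lemma ratio_pos {ω : ℤ → ℝ} (hω : ∀ i : ℤ, 0 < ω i ∧ ω i < 1) (i : ℤ) :
    0 < (1 - ω i) / ω i :=
  div_pos (by linarith [(hω i).2]) (hω i).1

lemma expV_succ {ω : ℤ → ℝ} (hω : ∀ i : ℤ, 0 < ω i ∧ ω i < 1) (n : ℕ) :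
    Real.exp (V ω (n + 1)) = Real.exp (V ω n) * ((1 - ω (n + 1 : ℕ)) / ω (n + 1 : ℕ)) := by
  rw [V_succ, Real.exp_add, Real.exp_log (ratio_pos hω _)]

lemma S_sub {ω : ℤ → ℝ} (hω : ∀ i : ℤ, 0 < ω i ∧ ω i < 1) (m : ℕ) :
    S ω (m + 1) - ω (m + 1 : ℕ) * S ω (m + 2) = (1 - ω (m + 1 : ℕ)) * S ω m := by
  have h := expV_succ hω m
  have hw : ω (m + 1 : ℕ) ≠ 0 := ne_of_gt (hω _).1
  have hc : (1 - ω (m + 1 : ℕ)) / ω (m + 1 : ℕ) * ω (m + 1 : ℕ) = 1 - ω (m + 1 : ℕ) :=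
    div_mul_cancel₀ _ hw
  rw [show m + 2 = (m + 1) + 1 from rfl, S_succ ω (m + 1), S_succ ω m, h]
  linear_combination (-Real.exp (V ω m)) * hc

lemma hat_ratio {ω : ℤ → ℝ} (hω : ∀ i : ℤ, 0 < ω i ∧ ω i < 1) (m : ℕ) :
    (1 - hatω ω (m + 1 : ℕ)) / hatω ω (m + 1 : ℕ) =
      ((1 - ω (m + 1 : ℕ)) / ω (m + 1 : ℕ)) * (S ω m / S ω (m + 2)) := by
  have ht : ((m + 1 : ℕ) : ℤ).toNat = m + 1 := by simp
  have hS1 : S ω (m + 1) ≠ 0 := ne_of_gt (S_pos ω (by omega))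
  have hS2 : S ω (m + 2) ≠ 0 := ne_of_gt (S_pos ω (by omega))
  have hw : ω (m + 1 : ℕ) ≠ 0 := ne_of_gt (hω _).1
  have hsub := S_sub hω m
  have hhat : hatω ω (m + 1 : ℕ) = ω (m + 1 : ℕ) * S ω (m + 2) / S ω (m + 1) := by
    simp only [hatω, ht]
  have h1 : 1 - hatω ω (m + 1 : ℕ) = (1 - ω (m + 1 : ℕ)) * S ω m / S ω (m + 1) := by
    rw [hhat, eq_div_iff hS1, sub_mul, one_mul, div_mul_cancel₀ _ hS1]
    linear_combination hsub
  rw [h1, hhat]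
  field_simp

theorem stmt8 (ω : ℤ → ℝ) (hω : ∀ i : ℤ, 0 < ω i ∧ ω i < 1) (a b : ℕ)
    (ha : 1 ≤ a) (hb : 1 ≤ b) :
    S (shift (b : ℤ) (hatω ω)) a =
      (S ω (b + 1) * S ω b / Real.exp (V ω b)) * (1 / S ω b - 1 / S ω (a + b)) := by
  have key : ∀ j : ℕ,
      Real.exp (V (shift (b : ℤ) (hatω ω)) j) *
        (Real.exp (V ω b) * S ω (b + j) * S ω (b + j + 1)) =
      Real.exp (V ω (b + j)) * (S ω b * S ω (b + 1)) := by
    intro j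
    induction j with
    | zero => simp [V_zero]; ring
    | succ j ih =>
      have hshift : shift (b : ℤ) (hatω ω) ((j + 1 : ℕ) : ℤ) = hatω ω ((b + j + 1 : ℕ) : ℤ) := by
        simp only [shift]
        congr 1
      have hVs : V (shift (b : ℤ) (hatω ω)) (j + 1) =
          V (shift (b : ℤ) (hatω ω)) j +
            Real.log ((1 - hatω ω (b + j + 1 : ℕ)) / hatω ω (b + j + 1 : ℕ)) := by
        rw [V_succ, hshift]
      have hratio := hat_ratio hω (b + j)
      have hρpos : 0 < (1 - hatω ω (b + j + 1 : ℕ)) / hatω ω (b + j + 1 : ℕ) := by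
        rw [hratio]
        exact mul_pos (ratio_pos hω _)
          (div_pos (S_pos ω (by omega)) (S_pos ω (by omega)))
      have hexp : Real.exp (V (shift (b : ℤ) (hatω ω)) (j + 1)) =
          Real.exp (V (shift (b : ℤ) (hatω ω)) j) *
            (((1 - ω (b + j + 1 : ℕ)) / ω (b + j + 1 : ℕ)) * (S ω (b + j) / S ω (b + j + 2))) := by
        rw [hVs, Real.exp_add, Real.exp_log hρpos, hratio]
      have hVω : Real.exp (V ω (b + j + 1)) =
          Real.exp (V ω (b + j)) * ((1 - ω (b + j + 1 : ℕ)) / ω (b + j + 1 : ℕ)) :=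
        expV_succ hω (b + j)
      have hSbj : S ω (b + j) ≠ 0 := ne_of_gt (S_pos ω (by omega))
      have hSbj1 : S ω (b + j + 1) ≠ 0 := ne_of_gt (S_pos ω (by omega))
      have hSbj2 : S ω (b + j + 2) ≠ 0 := ne_of_gt (S_pos ω (by omega))
      have hw : ω (b + j + 1 : ℕ) ≠ 0 := ne_of_gt (hω _).1
      rw [show b + (j + 1) = b + j + 1 from by ring, hexp,
        show b + j + 1 + 1 = b + j + 2 from by ring,
        hVω]
      have hcan : S ω (b + j) / S ω (b + j + 2) * S ω (b + j + 2) = S ω (b + j) :=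
        div_mul_cancel₀ _ hSbj2
      linear_combination (((1 - ω (b + j + 1 : ℕ)) / ω (b + j + 1 : ℕ)) *
          Real.exp (V (shift (b : ℤ) (hatω ω)) j) * Real.exp (V ω b) * S ω (b + j + 1)) * hcan +
        ((1 - ω (b + j + 1 : ℕ)) / ω (b + j + 1 : ℕ)) * ih
  have hterm : ∀ j : ℕ,
      Real.exp (V (shift (b : ℤ) (hatω ω)) j) =
        (S ω (b + 1) * S ω b / Real.exp (V ω b)) * (1 / S ω (b + j) - 1 / S ω (b + j + 1)) := by
    intro j
    have hSbj : S ω (b + j) ≠ 0 := ne_of_gt (S_pos ω (by omega))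
    have hSbj1 : S ω (b + j + 1) ≠ 0 := ne_of_gt (S_pos ω (by omega))
    have hVb : Real.exp (V ω b) ≠ 0 := ne_of_gt (Real.exp_pos _)
    have hE : Real.exp (V ω (b + j)) = S ω (b + j + 1) - S ω (b + j) := by
      rw [S_succ]; ring
    have hk := key j
    rw [hE] at hk
    field_simp
    linear_combination hk
  have htel : ∑ j ∈ Finset.range a, (1 / S ω (b + j) - 1 / S ω (b + j + 1)) =
      1 / S ω b - 1 / S ω (a + b) := by
    have h := Finset.sum_range_sub' (fun j => 1 / S ω (b + j)) a
    simpa [show ∀ j : ℕ, b + (j + 1) = b + j + 1 from fun j => by ring,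
      Nat.add_comm b a] using h
  calc S (shift (b : ℤ) (hatω ω)) a
      = ∑ j ∈ Finset.range a,
          ((S ω (b + 1) * S ω b / Real.exp (V ω b)) * (1 / S ω (b + j) - 1 / S ω (b + j + 1))) := by
        rw [S]; exact Finset.sum_congr rfl fun j _ => hterm j
    _ = (S ω (b + 1) * S ω b / Real.exp (V ω b)) *
          ∑ j ∈ Finset.range a, (1 / S ω (b + j) - 1 / S ω (b + j + 1)) := by
        rw [Finset.mul_sum]
    _ = (S ω (b + 1) * S ω b / Real.exp (V ω b)) * (1 / S ω b - 1 / S ω (a + b)) := by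
        rw [htel]
end
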